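/- Let G be a countable group. Then: (i) the AC-center AC(G) and the inner radical I(G) are amenable characteristic subgroups of G; (ii) AC(G) ≤ I(G); (iii) the actions AC(G)⋊G ↷ AC(G) and I(G)⋊G ↷ I(G) are amenable; (iv) G/C_G(AC(G)) is residually amenable; (v) if I(G) is infinite then G is inner amenable. -/

import Mathlib

open Pointwise

/-- A mean on `X`: a finitely additive probability measure defined on all subsets of `X`. -/
structure Mean (X : Type*) where
  m : Set X → ℝ
  nonneg : ∀ A : Set X, 0 ≤ m A
  total : m Set.univ = 1
  fin_add : ∀ A B : Set X, Disjoint A B → m (A ∪ B) = m A + m B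

/-- A mean on a `G`-set `X` is invariant if it is preserved by the action of every `g ∈ G`. -/
def MeanInvariant (G : Type*) [Group G] {X : Type*} [MulAction G X] (m : Mean X) : Prop :=
  ∀ (g : G) (A : Set X), m.m ((fun x => g • x) '' A) = m.m A

/-- The action of `G` on `X` is amenable: there is a `G`-invariant mean on `X`. -/
def AmenableAction (G : Type*) [Group G] (X : Type*) [MulAction G X] : Prop :=
  ∃ m : Mean X, MeanInvariant G m

/-- A group is amenable if its left translation action on itself admits an invariant mean. -/
def AmenableGroup (G : Type*) [Group G] : Prop :=
  ∃ m : Mean G, ∀ (g : G) (A : Set G), m.m ((fun x => g * x) '' A) = m.m A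

/-- `H` is `L`-q-normal in `M` if `{g ∈ M : gHg⁻¹ ∩ H ∈ L}` generates `M`. -/
def IsLQNormal {G : Type*} [Group G] (L : Subgroup G → Prop) (H M : Subgroup G) : Prop :=
  H ≤ M ∧
    Subgroup.closure
      {g : G | g ∈ M ∧ L (Subgroup.map (MulAut.conj g).toMonoidHom H ⊓ H)} = M

/-- `H` is `L`-wq-normal in `M`: there is an increasing ordinal-indexed chain from `H` to `M`
whose unions of initial segments are `L`-q-normal at every stage. -/
def IsLWQNormal {G : Type*} [Group G] (L : Subgroup G → Prop) (H M : Subgroup G) : Prop :=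
  ∃ (lam : Ordinal.{0}) (c : Ordinal.{0} → Subgroup G),
    (∀ α β : Ordinal.{0}, α ≤ β → β ≤ lam → c α ≤ c β) ∧
    c 0 = H ∧ c lam = M ∧
    ∀ α : Ordinal.{0}, 0 < α → α ≤ lam →
      IsLQNormal L (⨆ (β : Ordinal.{0}) (_ : β < α), c β) (c α)

/-- q*-normality: `{g ∈ M : gHg⁻¹ ∩ H nonamenable}` generates `M`. -/
def IsQStarNormal {G : Type*} [Group G] (H M : Subgroup G) : Prop :=
  IsLQNormal (fun K => ¬ AmenableGroup ↥K) H M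

/-- wq*-normality. -/
def IsWQStarNormal {G : Type*} [Group G] (H M : Subgroup G) : Prop :=
  IsLWQNormal (fun K => ¬ AmenableGroup ↥K) H M

/-- q-normality: `{g ∈ M : gHg⁻¹ ∩ H infinite}` generates `M`. -/
def IsQNormal {G : Type*} [Group G] (H M : Subgroup G) : Prop :=
  IsLQNormal (fun K => ((K : Set G)).Infinite) H M

/-- wq-normality. -/
def IsWQNormal {G : Type*} [Group G] (H M : Subgroup G) : Prop :=
  IsLWQNormal (fun K => ((K : Set G)).Infinite) H M

/-- `n`-degree `L`-wq-normality in `G`: `L₀ = L`, `L_{n+1} = {H : H is Lₙ-wq-normal in G}`. -/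
def NDegLWQNormal {G : Type*} [Group G] (L : Subgroup G → Prop) : ℕ → Subgroup G → Prop
  | 0, H => L H
  | n + 1, H => IsLWQNormal (NDegLWQNormal L n) H ⊤

/-- The isoperimetric constant `φ_S(X)` of a `G`-set `X` with respect to a finite `S ⊆ G`. -/
noncomputable def phiConst {G : Type*} [Group G] (S : Finset G) (X : Type*) [MulAction G X] :
    ℝ :=
  sInf {r : ℝ | ∃ P : Finset X, P.Nonempty ∧
    r = (∑ s ∈ S, (((s • (P : Set X)) \ (P : Set X)).ncard : ℝ)) / (P.card : ℝ)}


/-- `G` is inner amenable: there is an atomless mean on `G` invariant under conjugation. -/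
def InnerAmenable (G : Type*) [Group G] : Prop :=
  ∃ m : Mean G, (∀ g : G, m.m {g} = 0) ∧
    ∀ (g : G) (A : Set G), m.m ((fun x => g * x * g⁻¹) '' A) = m.m A

/-- Amenability of the action `N ⋊ G ↷ N` (for `N ≤ G`): there is a mean on `G`
concentrated on `N` which is invariant under left translation by elements of `N` and under
conjugation by all elements of `G`. -/
def SemidirectAmenable {G : Type*} [Group G] (N : Subgroup G) : Prop :=
  ∃ m : Mean G, m.m (N : Set G) = 1 ∧
    (∀ n ∈ N, ∀ A : Set G, m.m ((fun x => n * x) '' A) = m.m A) ∧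
    (∀ (g : G) (A : Set G), m.m ((fun x => g * x * g⁻¹) '' A) = m.m A)

/-- Amenability of the quotient group `G ⧸ K` (meaningful when `K` is normal). -/
def AmenableQuotientBy {G : Type*} [Group G] (K : Subgroup G) : Prop :=
  ∀ [_instN : K.Normal], AmenableGroup (G ⧸ K)

/-- The AC-center of `G`: the subgroup generated by all normal subgroups `N` of `G` with
`G/C_G(N)` amenable. -/
def ACCenter (G : Type*) [Group G] : Subgroup G :=
  Subgroup.closure
    (⋃ N ∈ {N : Subgroup G | N.Normal ∧
        AmenableQuotientBy (Subgroup.centralizer (N : Set G))}, (N : Set G))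

/-- The inner radical of `G`: the subgroup generated by all normal subgroups `N` of `G`
such that the action `N ⋊ G ↷ N` is amenable. -/
def InnerRadical (G : Type*) [Group G] : Subgroup G :=
  Subgroup.closure
    (⋃ N ∈ {N : Subgroup G | N.Normal ∧ SemidirectAmenable N}, (N : Set G))

/-- A mean on `G` invariant under conjugation. -/
def ConjInvMean {G : Type*} [Group G] (m : Mean G) : Prop :=
  ∀ (g : G) (A : Set G), m.m ((fun x => g * x * g⁻¹) '' A) = m.m A

universe u

/-- A group is residually amenable if every nonidentity element has a homomorphism to an
amenable group not killing it. -/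
def ResiduallyAmenable (G : Type u) [Group G] : Prop :=
  ∀ g : G, g ≠ 1 → ∃ A : GrpCat.{u}, AmenableGroup A ∧ ∃ f : G →* A, f g ≠ 1

/-!
Three operations on means carry the whole argument: push-forward along maps, pointwise limits
along ultrafilters, and averaging a family of means `ν q` against a mean `μ`,
`(μ.bind ν) A = ∫ ν q A dμ(q)`, where the integral against a finitely additive `μ` is the
layer-cake integral `∫₀¹ μ {f ≥ t} dt` (additive by a staircase approximation).

Averaging translates (a convolution of means) shows that the normal subgroups `N` with
`N ⋊ G ↷ N` amenable are closed under finite joins, and ultralimits show they are closed under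
directed unions; hence `I(G)` is one of them, and it is characteristic because the class is
`Aut(G)`-invariant. If `G/C_G(N)` is amenable, then `N` is an amenable extension of the abelian
group `N ∩ C_G(N)` (amenable through the Følner intervals of `ℤ`) by a subgroup of `G/C_G(N)`,
and averaging the conjugates of an invariant mean on `N` over an invariant mean on `G/C_G(N)`
makes it conjugation invariant; so `AC(G) ≤ I(G)`. An element outside `C_G(AC(G))` fails to
centralize one of the generating `N` and survives in the amenable quotient `G/C_G(N)`. Finally, a
mean invariant under an infinite subgroup has no atoms, which gives inner amenability.
-/

open Filter Topology

namespace Mean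

variable {X Y : Type*} (m : Mean X)

theorem m_empty : m.m ∅ = 0 := by
  have h := m.fin_add ∅ Set.univ (Set.empty_disjoint _)
  rw [Set.empty_union] at h
  linarith

theorem m_mono {A B : Set X} (h : A ⊆ B) : m.m A ≤ m.m B := by
  have := m.fin_add A (B \ A) Set.disjoint_sdiff_right
  rw [Set.union_sdiff_cancel h] at this
  linarith [m.nonneg (B \ A)]

theorem m_le_one (A : Set X) : m.m A ≤ 1 :=
  m.total ▸ m.m_mono (Set.subset_univ A)

theorem m_inter_of_eq_one {S : Set X} (hS : m.m S = 1) (A : Set X) : m.m (A ∩ S) = m.m A := by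
  have hA := m.fin_add (A ∩ S) (A \ S) Set.disjoint_sdiff_inter.symm
  have hS' := m.fin_add S Sᶜ disjoint_compl_right
  rw [Set.inter_union_sdiff] at hA
  rw [Set.union_compl_self, m.total, hS] at hS'
  have := m.m_mono (show A \ S ⊆ Sᶜ from fun _ hx => hx.2)
  linarith [m.nonneg (A \ S)]

theorem m_eq_one_of_subset {S A : Set X} (hS : m.m S = 1) (h : S ⊆ A) : m.m A = 1 :=
  le_antisymm (m.m_le_one A) (hS ▸ m.m_mono h)

theorem m_finset (s : Finset X) : m.m s = ∑ x ∈ s, m.m {x} := by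
  classical
  induction s using Finset.induction_on with
  | empty => simpa using m.m_empty
  | insert a s ha ih =>
    rw [Finset.coe_insert, Set.insert_eq, m.fin_add _ _ (by simpa using ha),
      Finset.sum_insert ha, ih]

def map (f : X → Y) : Mean Y where
  m A := m.m (f ⁻¹' A)
  nonneg _ := m.nonneg _
  total := m.total
  fin_add _ _ h := m.fin_add _ _ (h.preimage f)

@[simp]
theorem map_apply (f : X → Y) (A : Set Y) : (m.map f).m A = m.m (f ⁻¹' A) := rfl

open Classical in
noncomputable def dirac (x : X) : Mean X where
  m A := if x ∈ A then 1 else 0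
  nonneg A := by split_ifs <;> norm_num
  total := by simp
  fin_add A B h := by
    by_cases hA : x ∈ A
    · simp [hA, Set.disjoint_left.1 h hA]
    · by_cases hB : x ∈ B <;> simp [hA, hB]

theorem dirac_apply_of_mem {x : X} {A : Set X} (h : x ∈ A) : (dirac x).m A = 1 := by
  simp [dirac, h]

theorem dirac_apply_eq_iff {x : X} {A B : Set X} (h : x ∈ A ↔ x ∈ B) :
    (dirac x).m A = (dirac x).m B := by
  by_cases hA : x ∈ A <;> simp [dirac, hA, ← h]

section Ultralimit

variable {ι : Type*} (u : Ultrafilter ι) (ms : ι → Mean X)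

theorem tendsto_limUnder_m (A : Set X) :
    Tendsto (fun i => (ms i).m A) u (𝓝 (limUnder (u : Filter ι) fun i => (ms i).m A)) := by
  obtain ⟨r, -, hr⟩ := isCompact_Icc.ultrafilter_le_nhds (u.map fun i => (ms i).m A)
    (by
      simp only [Ultrafilter.coe_map, le_principal_iff, mem_map]
      exact Filter.univ_mem' fun i => ⟨(ms i).nonneg A, (ms i).m_le_one A⟩)
  exact tendsto_nhds_limUnder ⟨r, hr⟩

noncomputable def ulim : Mean X where
  m A := limUnder (u : Filter ι) fun i => (ms i).m A
  nonneg A := ge_of_tendsto (tendsto_limUnder_m u ms A) (.of_forall fun i => (ms i).nonneg A)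
  total := tendsto_nhds_unique (tendsto_limUnder_m u ms _) (by
    simpa only [Mean.total] using tendsto_const_nhds (x := (1 : ℝ)))
  fin_add A B h := tendsto_nhds_unique (tendsto_limUnder_m u ms _) (by
    simpa only [(ms _).fin_add A B h] using
      (tendsto_limUnder_m u ms A).add (tendsto_limUnder_m u ms B))

theorem ulim_apply_eq_of_tendsto {A : Set X} {r : ℝ}
    (h : Tendsto (fun i => (ms i).m A) u (𝓝 r)) : (ulim u ms).m A = r :=
  tendsto_nhds_unique (tendsto_limUnder_m u ms A) h

theorem ulim_apply_eq_of_tendsto_sub {A B : Set X}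
    (h : Tendsto (fun i => (ms i).m A - (ms i).m B) u (𝓝 0)) :
    (ulim u ms).m A = (ulim u ms).m B := by
  have := (tendsto_limUnder_m u ms B).add h
  simp only [add_sub_cancel, add_zero] at this
  exact ulim_apply_eq_of_tendsto u ms this

theorem ulim_apply_eq_of_eventually {A B : Set X} (h : ∀ᶠ i in u, (ms i).m A = (ms i).m B) :
    (ulim u ms).m A = (ulim u ms).m B :=
  ulim_apply_eq_of_tendsto_sub u ms
    (tendsto_const_nhds.congr' (h.mono fun i hi => by simp [hi]))

end Ultralimit

section Group

variable {G : Type*} [Group G]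

def leftStabilizer (m : Mean G) : Subgroup G where
  carrier := {g | ∀ A, m.m ((g * ·) '' A) = m.m A}
  mul_mem' {g h} hg hh A := by
    have : (g * h * ·) '' A = (g * ·) '' ((h * ·) '' A) := by
      rw [Set.image_image]
      simp only [mul_assoc]
    rw [this, hg, hh]
  one_mem' A := by simp
  inv_mem' {g} hg A := by
    rw [← hg, Set.image_image]; simp

theorem m_preimage_mul_left {m : Mean G} {g : G} (hg : g ∈ m.leftStabilizer) (A : Set G) :
    m.m ((g * ·) ⁻¹' A) = m.m A := by
  rw [← Set.image_mul_left', inv_mem hg]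

theorem m_singleton_eq_zero {m : Mean G} {N : Subgroup G}
    (hN : (N : Set G).Infinite) (hm : N ≤ m.leftStabilizer) (g : G) : m.m {g} = 0 := by
  classical
  by_contra hg
  have hpos : 0 < m.m {g} := lt_of_le_of_ne (m.nonneg _) (Ne.symm hg)
  obtain ⟨k, hk⟩ := exists_nat_gt (1 / m.m {g})
  obtain ⟨T, hTN, hTk⟩ := hN.exists_subset_card_eq k
  have hsum : m.m ↑(T.image (· * g)) = k * m.m {g} := by
    rw [m.m_finset, Finset.sum_image fun _ _ _ _ h => mul_right_cancel h,
      Finset.sum_congr rfl fun n hn => ?_, Finset.sum_const, hTk, nsmul_eq_mul]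
    rw [← Set.image_singleton (f := (n * ·)), hm (hTN hn)]
  have := m.m_le_one ↑(T.image (· * g))
  rw [div_lt_iff₀ hpos] at hk
  linarith

end Group

end Mean

theorem image_conj_eq_preimage {G : Type*} [Group G] (g : G) (A : Set G) :
    (fun x => g * x * g⁻¹) '' A = (fun x => g⁻¹ * x * g) ⁻¹' A :=
  congrFun (Set.image_eq_preimage_of_inverse (fun x => by group) (fun x => by group)) A

theorem ConjInvMean.m_preimage {G : Type*} [Group G] {m : Mean G} (h : ConjInvMean m) (g : G)
    (A : Set G) : m.m ((fun x => g⁻¹ * x * g) ⁻¹' A) = m.m A := by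
  rw [← image_conj_eq_preimage, h]

section AmenableSubgroup

variable {G H : Type*} [Group G] [Group H]

def AmenableSubgroup (N : Subgroup G) : Prop :=
  ∃ m : Mean G, m.m N = 1 ∧ N ≤ m.leftStabilizer

theorem AmenableGroup.amenableSubgroup_range (hH : AmenableGroup H) (f : H →* G) :
    AmenableSubgroup f.range := by
  obtain ⟨m, hm⟩ := hH
  refine ⟨m.map f, by simpa using m.total, ?_⟩
  rintro _ ⟨h, rfl⟩ A
  have : f ⁻¹' (((f h)⁻¹ * ·) ⁻¹' A) = (h⁻¹ * ·) ⁻¹' (f ⁻¹' A) := by ext; simp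
  rw [Mean.map_apply, Mean.map_apply, Set.image_mul_left, this, ← Set.image_mul_left, hm]

theorem AmenableGroup.amenableSubgroup {N : Subgroup G} (hN : AmenableGroup N) :
    AmenableSubgroup N := by
  simpa using hN.amenableSubgroup_range N.subtype

theorem AmenableGroup.of_surjective (hH : AmenableGroup H) (f : H →* G)
    (hf : Function.Surjective f) : AmenableGroup G := by
  obtain ⟨m, -, hm⟩ := hH.amenableSubgroup_range f
  rw [MonoidHom.range_eq_top.2 hf] at hm
  exact ⟨m, fun g => hm (Subgroup.mem_top g)⟩

theorem AmenableSubgroup.amenableGroup {N : Subgroup G} (h : AmenableSubgroup N) :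
    AmenableGroup N := by
  obtain ⟨m, hm, hN⟩ := h
  refine ⟨⟨fun B => m.m (Subtype.val '' B), fun _ => m.nonneg _, by simpa using hm,
    fun B C hBC => ?_⟩, fun n B => ?_⟩
  · simp only [Set.image_union]
    exact m.fin_add _ _ ((Set.disjoint_image_iff Subtype.val_injective).2 hBC)
  · show m.m (Subtype.val '' ((n * ·) '' B)) = m.m (Subtype.val '' B)
    rw [Set.image_image, show (fun x : N => ((n * x : N) : G)) = ((n : G) * ·) ∘ Subtype.val
      from rfl, Set.image_comp, hN n.2]

theorem AmenableGroup.subgroup (hG : AmenableGroup G) (H : Subgroup G) : AmenableGroup H := by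
  obtain ⟨μ, hμ⟩ := hG
  obtain ⟨T, hT, -⟩ := H.exists_isComplement_right 1
  let r : G → H := fun g => (hT.equiv g).1
  have hr (h : H) (g : G) : r (h * g) = h * r g := congrArg Prod.fst (hT.equiv_mul_left h g)
  refine ⟨μ.map r, fun h B => ?_⟩
  have : r ⁻¹' ((h * ·) '' B) = ((h : G) * ·) '' (r ⁻¹' B) := by
    ext g
    simp only [Set.image_mul_left, Set.mem_preimage, ← Subgroup.coe_inv, hr]
  simp only [Mean.map_apply]
  rw [this, hμ]

theorem AmenableGroup.of_injective (hG : AmenableGroup G) (f : H →* G)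
    (hf : Function.Injective f) : AmenableGroup H :=
  (hG.subgroup f.range).of_surjective (MonoidHom.ofInjective hf).symm.toMonoidHom
    (MonoidHom.ofInjective hf).symm.surjective

end AmenableSubgroup

/-! ### Følner sets -/

open Classical in
noncomputable def Mean.uniform {X : Type*} (s : Finset X) (hs : s.Nonempty) : Mean X where
  m A := ((s.filter (· ∈ A)).card : ℝ) / s.card
  nonneg _ := by positivity
  total := by simp [hs.card_pos.ne']
  fin_add A B h := by
    simp only [Set.mem_union, Finset.filter_or]
    rw [Finset.card_union_of_disjoint
      (Finset.disjoint_filter.2 fun _ _ hA => Set.disjoint_left.1 h hA), Nat.cast_add, add_div]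

theorem Finset.card_filter_le_card_filter_add_card_sdiff {X : Type*} [DecidableEq X]
    (s t : Finset X) (p : X → Prop) [DecidablePred p] :
    (s.filter p).card ≤ (t.filter p).card + (s \ t).card := by
  refine (Finset.card_le_card fun x hx => ?_).trans (Finset.card_union_le _ _)
  by_cases hxt : x ∈ t <;> simp_all

theorem Mean.abs_uniform_image_mul_sub_le {G : Type*} [Group G] [DecidableEq G] (F : Finset G)
    (hF : F.Nonempty) (g : G) (A : Set G) :
    |(uniform F hF).m ((g * ·) '' A) - (uniform F hF).m A| ≤
      ((F.image (g⁻¹ * ·) \ F).card : ℝ) / F.card := by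
  classical
  set s := F.image (g⁻¹ * ·)
  have hs : s.card = F.card := Finset.card_image_of_injective _ (mul_right_injective g⁻¹)
  have hgA : (F.filter (· ∈ (g * ·) '' A)).card = (s.filter (· ∈ A)).card := by
    rw [Finset.filter_image, Finset.card_image_of_injective _ (mul_right_injective _)]
    simp [Set.image_mul_left]
  have h₁ : ((s.filter (· ∈ A)).card : ℝ) ≤ (F.filter (· ∈ A)).card + (s \ F).card := by
    exact_mod_cast Finset.card_filter_le_card_filter_add_card_sdiff s F (· ∈ A)
  have h₂ : ((F.filter (· ∈ A)).card : ℝ) ≤ (s.filter (· ∈ A)).card + (s \ F).card := by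
    rw [← Finset.card_sdiff_comm hs.symm]
    exact_mod_cast Finset.card_filter_le_card_filter_add_card_sdiff F s (· ∈ A)
  simp only [uniform]
  rw [hgA, ← sub_div, abs_div, Nat.abs_cast]
  gcongr
  rw [abs_sub_le_iff]
  constructor <;> linarith

theorem AmenableGroup.of_folner {G ι : Type*} [Group G] [DecidableEq G] {l : Filter ι}
    [l.NeBot] (F : ι → Finset G) (hF : ∀ i, (F i).Nonempty)
    (h : ∀ g, Tendsto (fun i => (((F i).image (g * ·) \ F i).card : ℝ) / (F i).card) l (𝓝 0)) :
    AmenableGroup G := by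
  refine ⟨Mean.ulim (Ultrafilter.of l) fun i => Mean.uniform (F i) (hF i), fun g A => ?_⟩
  refine Mean.ulim_apply_eq_of_tendsto_sub _ _ (squeeze_zero_norm (fun i => ?_)
    ((h g⁻¹).mono_left (Ultrafilter.of_le l)))
  exact Mean.abs_uniform_image_mul_sub_le (F i) (hF i) g A

theorem amenableGroup_multiplicative_int : AmenableGroup (Multiplicative ℤ) := by
  let F (n : ℕ) : Finset (Multiplicative ℤ) :=
    (Finset.Ico (0 : ℤ) (n + 1)).image Multiplicative.ofAdd
  have hcard (n : ℕ) : (F n).card = n + 1 := by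
    rw [Finset.card_image_of_injective _ Multiplicative.ofAdd.injective]
    simp
  have hsdiff (g : Multiplicative ℤ) (n : ℕ) :
      ((F n).image (g * ·) \ F n).card ≤ g.toAdd.natAbs := by
    simp only [F, Finset.image_image]
    rw [show (g * ·) ∘ Multiplicative.ofAdd = Multiplicative.ofAdd ∘ (g.toAdd + ·) from rfl,
      ← Finset.image_image, Finset.image_add_left_Ico,
      ← Finset.image_sdiff _ _ Multiplicative.ofAdd.injective]
    refine Finset.card_image_le.trans ?_
    calc _ ≤ (Finset.Ico g.toAdd 0 ∪ Finset.Ico (n + 1 : ℤ) (g.toAdd + (n + 1))).card :=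
          Finset.card_le_card fun x hx => by
            simp only [Finset.mem_sdiff, Finset.mem_Ico, Finset.mem_union] at hx ⊢
            omega
      _ ≤ g.toAdd.natAbs := (Finset.card_union_le _ _).trans (by simp only [Int.card_Ico]; omega)
  refine AmenableGroup.of_folner (l := atTop) F (fun n => by simp [F]) fun g => ?_
  refine squeeze_zero (fun n => by positivity) (fun n => ?_)
    (by simpa only [mul_zero] using
      tendsto_one_div_add_atTop_nhds_zero_nat.const_mul (g.toAdd.natAbs : ℝ))
  rw [hcard, mul_one_div]
  push_cast
  gcongr
  exact_mod_cast hsdiff g n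

/-! ### Integration against a mean -/

theorem intervalIntegral_eq_sub_mul_of_eqOn_Ioo {f : ℝ → ℝ} {a b k : ℝ} (hab : a ≤ b)
    (h : ∀ t ∈ Set.Ioo a b, f t = k) : ∫ t in a..b, f t = (b - a) * k := by
  rw [intervalIntegral.integral_congr_Ioo_of_le hab (g := fun _ => k) h]
  simp

theorem Antitone.intervalIntegral_comp_sub {L : ℝ → ℝ} (hL : Antitone L) (c : ℝ) :
    ∫ t in (0 : ℝ)..1, L (t - c) =
      (∫ t in -c..0, L t) + (∫ t in (0 : ℝ)..1, L t) - ∫ t in 1 - c..1, L t := by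
  rw [intervalIntegral.integral_comp_sub_right, zero_sub,
    ← intervalIntegral.integral_add_adjacent_intervals (b := 0) hL.intervalIntegrable
      hL.intervalIntegrable,
    ← intervalIntegral.integral_add_adjacent_intervals (a := 0) (b := 1 - c) (c := 1)
      hL.intervalIntegrable hL.intervalIntegrable]
  ring

namespace Mean

variable {X : Type*} (m : Mean X)

/-- The layer-cake integral `∫₀¹ m {f ≥ t} dt`. It is the integral of `f` against `m` only for
`f` with values in `[0, 1]`. -/
noncomputable def integral (f : X → ℝ) : ℝ := ∫ t in (0 : ℝ)..1, m.m {x | t ≤ f x}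

theorem antitone_layer (f : X → ℝ) : Antitone fun t => m.m {x | t ≤ f x} :=
  fun _ _ hst => m.m_mono fun _ hx => hst.trans hx

theorem integral_nonneg (f : X → ℝ) : 0 ≤ m.integral f :=
  intervalIntegral.integral_nonneg zero_le_one fun _ _ => m.nonneg _

theorem integral_mono {f g : X → ℝ} (h : ∀ x, f x ≤ g x) : m.integral f ≤ m.integral g :=
  intervalIntegral.integral_mono_on zero_le_one (m.antitone_layer f).intervalIntegrable
    (m.antitone_layer g).intervalIntegrable fun _ _ => m.m_mono fun x hx => hx.trans (h x)

theorem integral_congr_ae {S : Set X} (hS : m.m S = 1) {f g : X → ℝ}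
    (h : ∀ x ∈ S, f x = g x) : m.integral f = m.integral g := by
  refine intervalIntegral.integral_congr fun t _ => ?_
  rw [← m.m_inter_of_eq_one hS, ← m.m_inter_of_eq_one hS {x | t ≤ g x}]
  congr 1
  ext x
  simp only [Set.mem_inter_iff, Set.mem_ofPred_eq]
  exact and_congr_left fun hx => by rw [h x hx]

theorem integral_comp_of_preimage {φ : X → X} (hφ : ∀ A, m.m (φ ⁻¹' A) = m.m A) (f : X → ℝ) :
    m.integral (fun x => f (φ x)) = m.integral f :=
  intervalIntegral.integral_congr fun t _ => hφ {x | t ≤ f x}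

theorem integral_one : m.integral (fun _ => 1) = 1 := by
  rw [integral, intervalIntegral_eq_sub_mul_of_eqOn_Ioo zero_le_one (k := 1)
    fun t ht => by simp [ht.2.le, m.total]]
  simp

theorem integral_zero : m.integral (fun _ => 0) = 0 := by
  rw [integral, intervalIntegral_eq_sub_mul_of_eqOn_Ioo zero_le_one (k := 0)
    fun t ht => by simp [not_le.2 ht.1, m.m_empty]]
  simp

theorem integral_le_add_of_le_add {f g : X → ℝ} {c : ℝ} (hc : 0 ≤ c)
    (h : ∀ x, f x ≤ g x + c) : m.integral f ≤ m.integral g + c := by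
  have hg := m.antitone_layer g
  have hlow : ∫ t in -c..0, m.m {x | t ≤ g x} ≤ c := by
    simpa using intervalIntegral.integral_mono_on (neg_nonpos.2 hc) hg.intervalIntegrable
      (intervalIntegrable_const (μ := MeasureTheory.volume) (c := (1 : ℝ)))
      fun t _ => m.m_le_one {x | t ≤ g x}
  have hhigh : 0 ≤ ∫ t in 1 - c..1, m.m {x | t ≤ g x} :=
    intervalIntegral.integral_nonneg (by linarith) fun _ _ => m.nonneg _
  calc m.integral f ≤ ∫ t in (0 : ℝ)..1, m.m {x | t - c ≤ g x} :=
        intervalIntegral.integral_mono_on zero_le_one (m.antitone_layer f).intervalIntegrable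
          (hg.comp_monotone fun _ _ hst => sub_le_sub_right hst c).intervalIntegrable
          fun t _ => m.m_mono fun x (hx : t ≤ f x) => show t - c ≤ g x by linarith [h x]
    _ ≤ m.integral g + c := by
      rw [hg.intervalIntegral_comp_sub, integral]
      linarith

theorem integral_add_indicator {f : X → ℝ} (hf : ∀ x, 0 ≤ f x) {c : ℝ} (hc : 0 ≤ c)
    {A : Set X} (hA : ∀ x ∈ A, f x + c ≤ 1) :
    m.integral (fun x => f x + A.indicator (fun _ => c) x) = m.integral f + c * m.m A := by
  let P t := m.m ({x | t ≤ f x} \ A)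
  let R t := m.m ({x | t ≤ f x} ∩ A)
  have hP : Antitone P := fun _ _ hst =>
    m.m_mono (Set.sdiff_subset_sdiff_left fun _ hx => hst.trans hx)
  have hR : Antitone R := fun _ _ hst =>
    m.m_mono (Set.inter_subset_inter_left _ fun _ hx => hst.trans hx)
  have hlayer (t : ℝ) :
      m.m {x | t ≤ f x + A.indicator (fun _ => c) x} = P t + R (t - c) := by
    rw [← m.fin_add _ _ (Set.disjoint_sdiff_left.mono_right Set.inter_subset_right)]
    congr 1
    ext x
    by_cases hx : x ∈ A <;> simp [hx]
  have hf_layer (t : ℝ) : m.m {x | t ≤ f x} = P t + R t := by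
    rw [← m.fin_add _ _ (Set.disjoint_sdiff_left.mono_right Set.inter_subset_right),
      Set.sdiff_union_inter]
  have hR_neg : ∫ t in -c..0, R t = c * m.m A := by
    rw [intervalIntegral_eq_sub_mul_of_eqOn_Ioo (k := m.m A) (neg_nonpos.2 hc) fun t ht => ?_]
    · ring
    · show m.m _ = m.m A
      congr 1
      ext x
      simpa using fun _ => ht.2.le.trans (hf x)
  have hR_top : ∫ t in 1 - c..1, R t = 0 := by
    rw [intervalIntegral_eq_sub_mul_of_eqOn_Ioo (k := 0) (by linarith) fun t ht => ?_, mul_zero]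
    convert m.m_empty
    ext x
    simpa using fun hx hxA => by linarith [hA x hxA, ht.1]
  calc m.integral (fun x => f x + A.indicator (fun _ => c) x)
      = ∫ t in (0 : ℝ)..1, (P t + R (t - c)) :=
        intervalIntegral.integral_congr fun t _ => hlayer t
    _ = (∫ t in (0 : ℝ)..1, P t) + ∫ t in (0 : ℝ)..1, R (t - c) :=
      intervalIntegral.integral_add hP.intervalIntegrable
        (hR.comp_monotone fun _ _ hst => sub_le_sub_right hst c).intervalIntegrable
    _ = m.integral f + c * m.m A := by
      rw [hR.intervalIntegral_comp_sub, hR_neg, hR_top, integral,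
        intervalIntegral.integral_congr fun t _ => hf_layer t,
        intervalIntegral.integral_add hP.intervalIntegrable hR.intervalIntegrable]
      ring

theorem integral_add_floor_min {f g : X → ℝ} (hf : ∀ x, 0 ≤ f x) (hfg : ∀ x, f x + g x ≤ 1)
    (n j : ℕ) :
    m.integral (fun x => f x + (min ⌊(n + 1) * g x⌋₊ j : ℕ) / ((n : ℝ) + 1)) =
      m.integral f + (∑ k ∈ Finset.range j, m.m {x | (k + 1 : ℝ) ≤ (n + 1) * g x}) / (n + 1) := by
  have hN : (0 : ℝ) < n + 1 := by positivity
  induction j with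
  | zero => simp
  | succ j ih =>
    let A := {x | (j + 1 : ℝ) ≤ (n + 1) * g x}
    have hstep (x : X) : f x + ((min ⌊(n + 1) * g x⌋₊ (j + 1) : ℕ) : ℝ) / ((n : ℝ) + 1) =
        (f x + ((min ⌊(n + 1) * g x⌋₊ j : ℕ) : ℝ) / ((n : ℝ) + 1)) +
          A.indicator (fun _ => 1 / ((n : ℝ) + 1)) x := by
      by_cases hx : x ∈ A
      · have : j + 1 ≤ ⌊(n + 1) * g x⌋₊ := Nat.le_floor (by exact_mod_cast hx.out)
        rw [Set.indicator_of_mem hx, min_eq_right this, min_eq_right (by omega)]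
        push_cast
        ring
      · have : ⌊(n + 1) * g x⌋₊ < j + 1 := by
          rw [Nat.floor_lt' (by omega)]
          push_cast
          exact not_le.1 hx
        rw [Set.indicator_of_notMem hx, min_eq_left (by omega), min_eq_left (by omega), add_zero]
    have hbound (x : X) (hx : x ∈ A) :
        f x + ((min ⌊(n + 1) * g x⌋₊ j : ℕ) : ℝ) / ((n : ℝ) + 1) + 1 / ((n : ℝ) + 1) ≤ 1 := by
      have : j ≤ ⌊(n + 1) * g x⌋₊ := Nat.le_floor (by linarith [hx.out])
      have hgx : ((j : ℝ) + 1) / (n + 1) ≤ g x := by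
        rw [div_le_iff₀ hN]
        linarith [hx.out]
      rw [min_eq_right this, add_assoc, ← add_div]
      linarith [hfg x]
    simp only [hstep]
    rw [m.integral_add_indicator (fun x => add_nonneg (hf x) (by positivity)) (by positivity)
      hbound, ih, Finset.sum_range_succ]
    ring

theorem integral_add {f g : X → ℝ} (hf : ∀ x, 0 ≤ f x) (hg : ∀ x, 0 ≤ g x)
    (hfg : ∀ x, f x + g x ≤ 1) :
    m.integral (fun x => f x + g x) = m.integral f + m.integral g := by
  -- Squeeze `g` between the staircase `s` and `s + 1 / (n + 1)`; on staircases additivity is exact.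
  have hbound (n : ℕ) :
      |m.integral (fun x => f x + g x) - m.integral f - m.integral g| ≤ 1 / ((n : ℝ) + 1) := by
    have hN : (0 : ℝ) < n + 1 := by positivity
    let s (x : X) : ℝ := (min ⌊(n + 1) * g x⌋₊ n : ℕ) / ((n : ℝ) + 1)
    have hs_le (x : X) : s x ≤ g x := by
      rw [div_le_iff₀ hN, mul_comm]
      exact (Nat.cast_le.2 (min_le_left _ _)).trans (Nat.floor_le (by nlinarith [hg x]))
    have hle_s (x : X) : g x ≤ s x + 1 / (n + 1) := by
      rw [← add_div, le_div_iff₀ hN, mul_comm]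
      rcases le_total ⌊(n + 1) * g x⌋₊ n with h | h
      · rw [min_eq_left h]
        exact (Nat.lt_floor_add_one _).le
      · rw [min_eq_right h]
        nlinarith [hfg x, hf x]
    let S := (∑ k ∈ Finset.range n, m.m {x | (k + 1 : ℝ) ≤ (n + 1) * g x}) / (n + 1)
    have h₁ : m.integral (fun x => f x + s x) = m.integral f + S :=
      m.integral_add_floor_min hf hfg n n
    have h₀ : m.integral (fun x => 0 + s x) = m.integral (fun _ => 0) + S :=
      m.integral_add_floor_min (fun _ => le_rfl) (fun x => by linarith [hfg x, hf x]) n n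
    simp only [zero_add, m.integral_zero] at h₀
    have := m.integral_mono fun x => (by linarith [hs_le x] : f x + s x ≤ f x + g x)
    have := m.integral_le_add_of_le_add (by positivity : (0 : ℝ) ≤ 1 / (n + 1))
      fun x => (by linarith [hle_s x] : f x + g x ≤ f x + s x + 1 / (n + 1))
    have := m.integral_mono hs_le
    have := m.integral_le_add_of_le_add (by positivity) hle_s
    rw [abs_le]
    constructor <;> linarith
  have := ge_of_tendsto' tendsto_one_div_add_atTop_nhds_zero_nat hbound
  linarith [abs_nonpos_iff.1 this]

variable {Q : Type*}

noncomputable def bind (μ : Mean Q) (ν : Q → Mean X) : Mean X where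
  m A := μ.integral fun q => (ν q).m A
  nonneg _ := μ.integral_nonneg _
  total := by simpa only [Mean.total] using μ.integral_one
  fin_add A B h := by
    simp only [(ν _).fin_add A B h]
    exact μ.integral_add (fun q => (ν q).nonneg A) (fun q => (ν q).nonneg B)
      fun q => (ν q).fin_add A B h ▸ (ν q).m_le_one _

@[simp]
theorem bind_apply (μ : Mean Q) (ν : Q → Mean X) (A : Set X) :
    (μ.bind ν).m A = μ.integral fun q => (ν q).m A := rfl

theorem bind_eq_one {μ : Mean Q} {ν : Q → Mean X} {S : Set Q} (hS : μ.m S = 1) {A : Set X}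
    (h : ∀ q ∈ S, (ν q).m A = 1) : (μ.bind ν).m A = 1 := by
  rw [bind_apply, μ.integral_congr_ae hS h, μ.integral_one]

theorem integral_comp_mul_left {G : Type*} [Group G] {μ : Mean G} {g : G}
    (hg : g ∈ μ.leftStabilizer) (f : G → ℝ) : μ.integral (fun x => f (g * x)) = μ.integral f :=
  μ.integral_comp_of_preimage (m_preimage_mul_left hg) f

end Mean

theorem ConjInvMean.integral_comp {G : Type*} [Group G] {μ : Mean G} (h : ConjInvMean μ) (g : G)
    (f : G → ℝ) : μ.integral (fun x => f (g⁻¹ * x * g)) = μ.integral f :=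
  μ.integral_comp_of_preimage (h.m_preimage g) f

theorem QuotientGroup.out_inv_mul_mem {G : Type*} [Group G] {K : Subgroup G} [K.Normal] (g : G)
    (q : G ⧸ K) : ((g : G ⧸ K) * q).out⁻¹ * (g * q.out) ∈ K :=
  QuotientGroup.eq.1 (by rw [QuotientGroup.out_eq', QuotientGroup.mk_mul, QuotientGroup.out_eq'])

/-! ### Semidirect amenability -/

section SemidirectAmenable

variable {G : Type*} [Group G]

theorem SemidirectAmenable.amenableSubgroup {N : Subgroup G} (h : SemidirectAmenable N) :
    AmenableSubgroup N :=
  let ⟨m, hm, hN, _⟩ := h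
  ⟨m, hm, hN⟩

theorem semidirectAmenable_bot : SemidirectAmenable (⊥ : Subgroup G) := by
  refine ⟨Mean.dirac 1, Mean.dirac_apply_of_mem (Subgroup.one_mem ⊥), fun n hn A => ?_,
    fun g A => Mean.dirac_apply_eq_iff ?_⟩
  · rw [Subgroup.mem_bot.1 hn]
    simp
  · simp [image_conj_eq_preimage]

theorem SemidirectAmenable.sup {H K : Subgroup G} [K.Normal] (hH : SemidirectAmenable H)
    (hK : SemidirectAmenable K) : SemidirectAmenable (H ⊔ K) := by
  obtain ⟨m₁, hm₁, hH₁, hc₁⟩ := hH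
  obtain ⟨m₂, hm₂, hK₂, hc₂⟩ := hK
  let m := m₁.bind fun x => m₂.map (x * ·)
  have hm (A : Set G) : m.m A = m₁.integral fun x => m₂.m ((x * ·) ⁻¹' A) := rfl
  refine ⟨m, Mean.bind_eq_one hm₁ fun x hx => m₂.m_eq_one_of_subset hm₂ fun k hk =>
      mul_mem (Subgroup.mem_sup_left hx) (Subgroup.mem_sup_right hk),
    show H ⊔ K ≤ m.leftStabilizer from sup_le (fun h hh A => ?_) (fun k hk A => ?_),
    fun g A => ?_⟩
  · rw [Set.image_mul_left, hm, hm]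
    simp only [Set.preimage_preimage, ← mul_assoc]
    exact Mean.integral_comp_mul_left (inv_mem (hH₁ h hh)) fun x => m₂.m ((x * ·) ⁻¹' A)
  · rw [Set.image_mul_left, hm, hm]
    congr 1
    funext x
    have hk' : x⁻¹ * k⁻¹ * x ∈ K := by
      simpa using Subgroup.Normal.conj_mem inferInstance k⁻¹ (inv_mem hk) x⁻¹
    rw [← Mean.m_preimage_mul_left (hK₂ _ hk') ((x * ·) ⁻¹' A)]
    congr 1
    ext y
    simp [mul_assoc]
  · rw [image_conj_eq_preimage, hm, hm]
    have (x : G) : m₂.m ((x * ·) ⁻¹' ((fun y => g⁻¹ * y * g) ⁻¹' A)) =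
        m₂.m ((g⁻¹ * x * g * ·) ⁻¹' A) := by
      rw [← ConjInvMean.m_preimage hc₂ g ((g⁻¹ * x * g * ·) ⁻¹' A)]
      congr 1
      ext y
      simp [mul_assoc]
    simp only [this]
    exact ConjInvMean.integral_comp hc₁ g fun x => m₂.m ((x * ·) ⁻¹' A)

theorem SemidirectAmenable.iSup_of_monotone {ι : Type*} [Preorder ι] [IsDirectedOrder ι]
    [Nonempty ι] {N : ι → Subgroup G} (hN : Monotone N) (h : ∀ i, SemidirectAmenable (N i)) :
    SemidirectAmenable (⨆ i, N i) := by
  choose m hm hinv hconj using h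
  let u := Ultrafilter.of (atTop : Filter ι)
  refine ⟨Mean.ulim u m, Mean.ulim_apply_eq_of_tendsto u m (tendsto_const_nhds.congr fun i =>
      ((m i).m_eq_one_of_subset (hm i) (le_iSup N i)).symm), fun n hn A => ?_,
    fun g A => Mean.ulim_apply_eq_of_eventually u m (.of_forall fun i => hconj i g A)⟩
  obtain ⟨i, hi⟩ := (Subgroup.mem_iSup_of_directed hN.directed_le).1 hn
  exact Mean.ulim_apply_eq_of_eventually u m (Ultrafilter.of_le _
    ((eventually_ge_atTop i).mono fun j hj => hinv j n (hN hj hi) A))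

theorem SemidirectAmenable.iSup {ι : Type*} {N : ι → Subgroup G} [∀ i, (N i).Normal]
    (h : ∀ i, SemidirectAmenable (N i)) : SemidirectAmenable (⨆ i, N i) := by
  have hfin (t : Finset ι) : SemidirectAmenable (⨆ i ∈ t, N i) := by
    classical
    induction t using Finset.induction_on with
    | empty => simpa using semidirectAmenable_bot
    | insert a t _ ih =>
      rw [Finset.iSup_insert]
      exact (h a).sup ih
  rw [iSup_eq_iSup_finset]
  exact .iSup_of_monotone (fun _ _ hst => biSup_mono fun _ hi => Finset.mem_of_subset hst hi) hfin

theorem SemidirectAmenable.map_equiv {N : Subgroup G} (h : SemidirectAmenable N) (ϕ : G ≃* G) :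
    SemidirectAmenable (N.map ϕ.toMonoidHom) := by
  obtain ⟨m, hm, hN, hc⟩ := h
  refine ⟨m.map ϕ, ?_, ?_, fun g A => ?_⟩
  · rwa [Mean.map_apply, Subgroup.coe_map, MulEquiv.coe_toMonoidHom,
      Set.preimage_image_eq _ ϕ.injective]
  · rintro _ ⟨n, hn, rfl⟩ A
    have : ϕ ⁻¹' ((ϕ.toMonoidHom n * ·) '' A) = (n * ·) '' (ϕ ⁻¹' A) := by
      ext x
      simp [Set.image_mul_left]
    rw [Mean.map_apply, Mean.map_apply, this, hN n hn]
  · have : ϕ ⁻¹' ((fun x => g * x * g⁻¹) '' A) =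
        (fun x => ϕ.symm g * x * (ϕ.symm g)⁻¹) '' (ϕ ⁻¹' A) := by
      ext x
      simp [image_conj_eq_preimage]
    rw [Mean.map_apply, Mean.map_apply, this, hc]

theorem SemidirectAmenable.innerAmenable {N : Subgroup G} (h : SemidirectAmenable N)
    (hN : (N : Set G).Infinite) : InnerAmenable G :=
  let ⟨m, _, hNm, hc⟩ := h
  ⟨m, m.m_singleton_eq_zero hN hNm, hc⟩

end SemidirectAmenable

section Extensions

variable {G : Type*} [Group G]

theorem amenableGroup_of_isMulCommutative (A : Type*) [Group A] [IsMulCommutative A] :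
    AmenableGroup A := by
  have hcomm (a b : A) : a * b = b * a := Std.Commutative.comm a b
  have (a : A) : (Subgroup.zpowers a).Normal :=
    ⟨fun n hn g => by rwa [hcomm g n, mul_inv_cancel_right]⟩
  have hz (a : A) : SemidirectAmenable (Subgroup.zpowers a) := by
    obtain ⟨m, hm, ha⟩ := amenableGroup_multiplicative_int.amenableSubgroup_range (zpowersHom A a)
    exact ⟨m, hm, ha, fun g B => by simp_rw [hcomm g, mul_inv_cancel_right, Set.image_id']⟩
  obtain ⟨m, -, hm, -⟩ := SemidirectAmenable.iSup hz
  exact ⟨m, fun g => hm g (Subgroup.mem_iSup_of_mem g (Subgroup.mem_zpowers g))⟩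

theorem AmenableGroup.of_amenableGroup_normal_quotient {K : Subgroup G} [K.Normal]
    (hK : AmenableGroup K) (hQ : AmenableGroup (G ⧸ K)) : AmenableGroup G := by
  obtain ⟨ζ, -, hKζ⟩ := hK.amenableSubgroup
  obtain ⟨μ, hμ⟩ := hQ
  refine ⟨μ.bind fun q => ζ.map (q.out * ·), fun g A => ?_⟩
  have (q : G ⧸ K) : ζ.m ((q.out * ·) ⁻¹' ((g⁻¹ * ·) ⁻¹' A)) =
      ζ.m ((fun y => (((g⁻¹ : G) : G ⧸ K) * q).out * y) ⁻¹' A) := by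
    rw [← Mean.m_preimage_mul_left (hKζ (QuotientGroup.out_inv_mul_mem g⁻¹ q))
      ((fun y => (((g⁻¹ : G) : G ⧸ K) * q).out * y) ⁻¹' A)]
    congr 1
    ext y
    simp [mul_assoc]
  rw [Set.image_mul_left]
  simp only [Mean.bind_apply, Mean.map_apply, this]
  exact Mean.integral_comp_mul_left (hμ _) fun q => ζ.m ((q.out * ·) ⁻¹' A)

theorem amenableGroup_of_amenableGroup_quotient_centralizer {N : Subgroup G} [N.Normal]
    (hQ : AmenableGroup (G ⧸ Subgroup.centralizer (N : Set G))) : AmenableGroup N := by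
  let f : N →* G ⧸ Subgroup.centralizer (N : Set G) := (QuotientGroup.mk' _).comp N.subtype
  have : IsMulCommutative f.ker := ⟨⟨fun a b => Subtype.ext <| Subtype.ext <|
    (Subgroup.mem_centralizer_iff.1 ((QuotientGroup.eq_one_iff _).1 a.2) _ b.1.2).symm⟩⟩
  exact AmenableGroup.of_amenableGroup_normal_quotient (amenableGroup_of_isMulCommutative _)
    (hQ.of_injective (QuotientGroup.kerLift f) (QuotientGroup.kerLift_injective f))

theorem SemidirectAmenable.of_amenableGroup_quotient_centralizer {N : Subgroup G} [N.Normal]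
    (hN : AmenableGroup N) (hQ : AmenableGroup (G ⧸ Subgroup.centralizer (N : Set G))) :
    SemidirectAmenable N := by
  obtain ⟨ν, hν, hNν⟩ := hN.amenableSubgroup
  obtain ⟨μ, hμ⟩ := hQ
  let m := μ.bind fun q => ν.map fun y => q.out * y * q.out⁻¹
  have hm (A : Set G) : m.m A = μ.integral fun q => ν.m ((fun y => q.out * y * q.out⁻¹) ⁻¹' A) :=
    rfl
  refine ⟨m, Mean.bind_eq_one (S := Set.univ) μ.total fun q _ => ν.m_eq_one_of_subset hν
      fun y hy => Subgroup.Normal.conj_mem inferInstance y hy q.out,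
    fun n hn A => ?_, fun g A => ?_⟩
  · rw [Set.image_mul_left, hm, hm]
    congr 1
    funext q
    have : q.out⁻¹ * n⁻¹ * q.out ∈ N := by
      simpa using Subgroup.Normal.conj_mem inferInstance n⁻¹ (inv_mem hn) q.out⁻¹
    rw [← Mean.m_preimage_mul_left (hNν this) ((fun y => q.out * y * q.out⁻¹) ⁻¹' A)]
    congr 1
    ext y
    simp [mul_assoc]
  · have (q : G ⧸ Subgroup.centralizer (N : Set G)) :
        ν.m ((fun y => q.out * y * q.out⁻¹) ⁻¹' ((fun x => g⁻¹ * x * g) ⁻¹' A)) =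
          ν.m ((fun y => (((g⁻¹ : G) : G ⧸ _) * q).out * y *
            (((g⁻¹ : G) : G ⧸ _) * q).out⁻¹) ⁻¹' A) := by
      have hd := QuotientGroup.out_inv_mul_mem g⁻¹ q
      set c' := (((g⁻¹ : G) : G ⧸ _) * q).out
      set d := c'⁻¹ * (g⁻¹ * q.out) with hd_def
      rw [← ν.m_inter_of_eq_one hν, ← ν.m_inter_of_eq_one hν ((fun y => c' * y * c'⁻¹) ⁻¹' A)]
      congr 1
      ext y
      simp only [Set.mem_inter_iff, Set.mem_preimage]
      refine and_congr_left fun hy => ?_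
      -- `g⁻¹ * q.out = c' * d` and `d` centralizes `N`.
      have hcomm : y * d = d * y := Subgroup.mem_centralizer_iff.1 hd y hy
      have : g⁻¹ * (q.out * y * q.out⁻¹) * g = c' * y * c'⁻¹ := by
        calc g⁻¹ * (q.out * y * q.out⁻¹) * g = c' * (d * y) * d⁻¹ * c'⁻¹ := by
              rw [hd_def]
              group
          _ = c' * y * c'⁻¹ := by
              rw [← hcomm]
              group
      rw [this]
    rw [image_conj_eq_preimage, hm, hm]
    simp only [this]
    exact Mean.integral_comp_mul_left (hμ _)
      fun q => ν.m ((fun y => q.out * y * q.out⁻¹) ⁻¹' A)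

theorem SemidirectAmenable.of_amenableQuotientBy_centralizer {N : Subgroup G} (hN : N.Normal)
    (hQ : AmenableQuotientBy (Subgroup.centralizer (N : Set G))) : SemidirectAmenable N := by
  have hQ' : AmenableGroup (G ⧸ Subgroup.centralizer (N : Set G)) := hQ
  exact .of_amenableGroup_quotient_centralizer
    (amenableGroup_of_amenableGroup_quotient_centralizer hQ') hQ'

end Extensions

/-! ### The AC-center and the inner radical -/

section Families

variable {G : Type*} [Group G]

theorem Subgroup.closure_biUnion_eq_iSup (S : Set (Subgroup G)) :
    Subgroup.closure (⋃ N ∈ S, (N : Set G)) = ⨆ N : S, (N : Subgroup G) := by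
  rw [Subgroup.iSup_eq_closure, Set.biUnion_eq_iUnion]

theorem SemidirectAmenable.closure_biUnion {S : Set (Subgroup G)}
    (hS : ∀ N ∈ S, N.Normal ∧ SemidirectAmenable N) :
    SemidirectAmenable (Subgroup.closure (⋃ N ∈ S, (N : Set G))) := by
  have (N : S) : (N : Subgroup G).Normal := (hS N N.2).1
  rw [Subgroup.closure_biUnion_eq_iSup]
  exact SemidirectAmenable.iSup fun N => (hS N N.2).2

theorem Subgroup.characteristic_closure_biUnion {S : Set (Subgroup G)}
    (hS : ∀ ϕ : G ≃* G, ∀ N ∈ S, N.map ϕ.toMonoidHom ∈ S) :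
    (Subgroup.closure (⋃ N ∈ S, (N : Set G))).Characteristic := by
  refine Subgroup.characteristic_iff_map_le.2 fun ϕ => ?_
  rw [MonoidHom.map_closure, Set.image_iUnion₂]
  exact Subgroup.closure_mono (Set.iUnion₂_subset fun N hN =>
    (Subgroup.coe_map _ N).symm.subset.trans
      (Set.subset_biUnion_of_mem (u := fun N : Subgroup G => (N : Set G)) (hS ϕ N hN)))

theorem AmenableQuotientBy.centralizer_map_equiv {N : Subgroup G} [N.Normal]
    (h : AmenableQuotientBy (Subgroup.centralizer (N : Set G))) (ϕ : G ≃* G) :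
    AmenableQuotientBy (Subgroup.centralizer ((N.map ϕ.toMonoidHom : Subgroup G) : Set G)) := by
  intro _
  have hle : Subgroup.centralizer (N : Set G) ≤
      (Subgroup.centralizer ((N.map ϕ.toMonoidHom : Subgroup G) : Set G)).comap ϕ.toMonoidHom := by
    rw [← Subgroup.map_le_iff_le_comap, Subgroup.coe_map]
    exact Subgroup.map_centralizer_le_centralizer_image _ _
  exact (h : AmenableGroup (G ⧸ Subgroup.centralizer (N : Set G))).of_surjective _
    (QuotientGroup.map_surjective_of_surjective _ _ ϕ.toMonoidHom
      (QuotientGroup.mk_surjective.comp ϕ.surjective) hle)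

end Families

section ACCenterInnerRadical

variable (G : Type*) [Group G]

theorem semidirectAmenable_innerRadical : SemidirectAmenable (InnerRadical G) :=
  SemidirectAmenable.closure_biUnion fun _ hN => hN

theorem semidirectAmenable_ACCenter : SemidirectAmenable (ACCenter G) :=
  SemidirectAmenable.closure_biUnion fun _ hN =>
    ⟨hN.1, .of_amenableQuotientBy_centralizer hN.1 hN.2⟩

theorem ACCenter_le_innerRadical : ACCenter G ≤ InnerRadical G :=
  Subgroup.closure_mono (Set.biUnion_subset_biUnion_left fun _ hN =>
    ⟨hN.1, .of_amenableQuotientBy_centralizer hN.1 hN.2⟩)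

theorem characteristic_innerRadical : (InnerRadical G).Characteristic :=
  Subgroup.characteristic_closure_biUnion fun ϕ _ hN =>
    ⟨hN.1.map _ ϕ.surjective, hN.2.map_equiv ϕ⟩

theorem characteristic_ACCenter : (ACCenter G).Characteristic :=
  Subgroup.characteristic_closure_biUnion fun ϕ _ hN =>
    have := hN.1
    ⟨hN.1.map _ ϕ.surjective, AmenableQuotientBy.centralizer_map_equiv hN.2 ϕ⟩

theorem residuallyAmenable_quotient_centralizer_ACCenter
    [(Subgroup.centralizer (ACCenter G : Set G)).Normal] :
    ResiduallyAmenable (G ⧸ Subgroup.centralizer (ACCenter G : Set G)) := by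
  intro q hq
  obtain ⟨x, rfl⟩ := QuotientGroup.mk_surjective q
  have hx : x ∉ Subgroup.centralizer (ACCenter G : Set G) := fun h =>
    hq ((QuotientGroup.eq_one_iff x).2 h)
  obtain ⟨N, hN, hxN⟩ : ∃ N ∈ {N : Subgroup G | N.Normal ∧
      AmenableQuotientBy (Subgroup.centralizer (N : Set G))},
      x ∉ Subgroup.centralizer (N : Set G) := by
    by_contra! h
    apply hx
    rw [ACCenter, Subgroup.centralizer_closure, Subgroup.mem_centralizer_iff]
    intro y hy
    obtain ⟨N, hN, hy⟩ := Set.mem_iUnion₂.1 hy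
    exact Subgroup.mem_centralizer_iff.1 (h N hN) y hy
  have := hN.1
  have hle : Subgroup.centralizer (ACCenter G : Set G) ≤ Subgroup.centralizer (N : Set G) :=
    Subgroup.centralizer_le (Subgroup.subset_closure.trans' (Set.subset_biUnion_of_mem hN))
  refine ⟨GrpCat.of (G ⧸ Subgroup.centralizer (N : Set G)), hN.2,
    QuotientGroup.map _ _ (MonoidHom.id G) hle, fun h => hxN ?_⟩
  exact (QuotientGroup.eq_one_iff (N := Subgroup.centralizer (N : Set G)) x).1 h

end ACCenterInnerRadical

theorem ACCenter_innerRadical_structure_general (G : Type*) [Group G] :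
    -- i.
    (AmenableGroup ↥(ACCenter G) ∧ (ACCenter G).Characteristic ∧
      AmenableGroup ↥(InnerRadical G) ∧ (InnerRadical G).Characteristic) ∧
    -- ii.
    ACCenter G ≤ InnerRadical G ∧
    -- iii.
    (SemidirectAmenable (ACCenter G) ∧ SemidirectAmenable (InnerRadical G)) ∧
    -- iv.
    (∀ [_inst : (Subgroup.centralizer ((ACCenter G : Subgroup G) : Set G)).Normal],
      ResiduallyAmenable (G ⧸ Subgroup.centralizer ((ACCenter G : Subgroup G) : Set G))) ∧
    -- v.
    (((InnerRadical G : Subgroup G) : Set G).Infinite → InnerAmenable G) := by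
  have hAC := semidirectAmenable_ACCenter G
  have hI := semidirectAmenable_innerRadical G
  refine ⟨⟨hAC.amenableSubgroup.amenableGroup, characteristic_ACCenter G,
      hI.amenableSubgroup.amenableGroup, characteristic_innerRadical G⟩,
    ACCenter_le_innerRadical G, ⟨hAC, hI⟩, ?_, hI.innerAmenable⟩
  intro _
  exact residuallyAmenable_quotient_centralizer_ACCenter G

/-- Theorem: parts i.-v. of the structure theorem for the AC-center and inner radical. -/
theorem ACCenter_innerRadical_structure (G : Type*) [Group G] [Countable G] :
    -- i.
    (AmenableGroup ↥(ACCenter G) ∧ (ACCenter G).Characteristic ∧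
      AmenableGroup ↥(InnerRadical G) ∧ (InnerRadical G).Characteristic) ∧
    -- ii.
    ACCenter G ≤ InnerRadical G ∧
    -- iii.
    (SemidirectAmenable (ACCenter G) ∧ SemidirectAmenable (InnerRadical G)) ∧
    -- iv.
    (∀ [_inst : (Subgroup.centralizer ((ACCenter G : Subgroup G) : Set G)).Normal],
      ResiduallyAmenable (G ⧸ Subgroup.centralizer ((ACCenter G : Subgroup G) : Set G))) ∧
    -- v.
    (((InnerRadical G : Subgroup G) : Set G).Infinite → InnerAmenable G) :=
  ACCenter_innerRadical_structure_general G
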